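/- Let ĉ > 0 be the constant of the nonlinear energy estimate ℰ[u](T) + ∫₀ᵀ (ℰ[u] + k[u]) dt ≤ ĉ( ℰ[u](0) + ess sup_{s∈[0,T]} ℰ[u](s) ∫₀ᵀ k[u] dt ), and suppose ℰ[u](0) ≤ η with η ≤ (4ĉ·max{1,ĉ})⁻¹. Then for every T > 0 one has ℰ[u](T) ≤ 2·max{1,ĉ}·η, and moreover ℰ[u](T) + ½∫₀ᵀ ( ℰ[u](t) + k[u](t) ) dt ≤ ĉ·ℰ[u](0). -/
import Mathlib


open MeasureTheory Set

noncomputable def lap {n : ℕ} (u : EuclideanSpace ℝ (Fin n) → ℝ)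
    (x : EuclideanSpace ℝ (Fin n)) : ℝ :=
  ∑ i : Fin n, fderiv ℝ (fun y => fderiv ℝ u y (EuclideanSpace.single i 1)) x
    (EuclideanSpace.single i 1)

noncomputable def dt {n : ℕ} (u : ℝ → EuclideanSpace ℝ (Fin n) → ℝ) :
    ℝ → EuclideanSpace ℝ (Fin n) → ℝ :=
  fun t x => deriv (fun s => u s x) t

noncomputable def dtn {n : ℕ} (k : ℕ) (u : ℝ → EuclideanSpace ℝ (Fin n) → ℝ) :
    ℝ → EuclideanSpace ℝ (Fin n) → ℝ :=
  dt^[k] u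

/-- Squared Sobolev norms `‖(-Δ)^(s/2) v‖_{L₂(Ω)}²` for `s = 0,…,4`, expressed through
gradients and Laplacians (Dirichlet boundary conditions). -/
noncomputable def HsSq {n : ℕ} (s : ℕ) (Ω : Set (EuclideanSpace ℝ (Fin n)))
    (v : EuclideanSpace ℝ (Fin n) → ℝ) : ℝ :=
  match s with
  | 0 => ∫ x in Ω, (v x)^2
  | 1 => ∫ x in Ω, ‖gradient v x‖^2
  | 2 => ∫ x in Ω, (lap v x)^2
  | 3 => ∫ x in Ω, ‖gradient (lap v) x‖^2
  | _ => ∫ x in Ω, (lap (lap v) x)^2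

noncomputable def supT (T : ℝ) (g : ℝ → ℝ) : ℝ := sSup (g '' Set.Icc 0 T)

noncomputable def intT (T : ℝ) (g : ℝ → ℝ) : ℝ := ∫ t in Set.Ioc 0 T, g t

noncomputable def VtildeSq {n : ℕ} (T : ℝ) (Ω : Set (EuclideanSpace ℝ (Fin n)))
    (v : ℝ → EuclideanSpace ℝ (Fin n) → ℝ) : ℝ :=
  max (intT T (fun t => HsSq 0 Ω (dtn 4 v t)))
  (max (intT T (fun t => HsSq 1 Ω (dtn 3 v t)))
  (max (intT T (fun t => HsSq 1 Ω (dtn 2 v t)))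
  (max (supT T (fun t => HsSq 2 Ω (dtn 2 v t)))
  (max (intT T (fun t => HsSq 1 Ω (dt v t)))
  (max (supT T (fun t => HsSq 3 Ω (dt v t)))
       (supT T (fun t => HsSq 3 Ω (v t))))))))

noncomputable def VnormSq {n : ℕ} (T : ℝ) (Ω : Set (EuclideanSpace ℝ (Fin n)))
    (v : ℝ → EuclideanSpace ℝ (Fin n) → ℝ) : ℝ :=
  supT T (fun t => HsSq 4 Ω (v t))
  + intT T (fun t => ∑ i ∈ Finset.range 2, HsSq 4 Ω (dtn i v t))
  + supT T (fun t => ∑ i ∈ Finset.range 3, HsSq 3 Ω (dtn i v t))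
  + intT T (fun t => ∑ i ∈ Finset.range 3, HsSq 3 Ω (dtn i v t))
  + supT T (fun t => ∑ i ∈ Finset.range 4, HsSq 1 Ω (dtn i v t))
  + intT T (fun t => ∑ i ∈ Finset.range 4, HsSq 2 Ω (dtn i v t))
  + intT T (fun t => ∑ i ∈ Finset.range 5, HsSq 0 Ω (dtn i v t))

/-- Membership in the space 𝒱. -/
def MemV {n : ℕ} (T : ℝ) (Ω : Set (EuclideanSpace ℝ (Fin n)))
    (v : ℝ → EuclideanSpace ℝ (Fin n) → ℝ) : Prop :=
  (∀ x, ContDiff ℝ 4 (fun t => v t x)) ∧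
  (∀ i : ℕ, i ≤ 4 → ∀ t, ContDiff ℝ 4 (dtn i v t)) ∧
  BddAbove ((fun t => HsSq 4 Ω (v t)) '' Icc 0 T) ∧
  BddAbove ((fun t => ∑ i ∈ Finset.range 3, HsSq 3 Ω (dtn i v t)) '' Icc 0 T) ∧
  BddAbove ((fun t => ∑ i ∈ Finset.range 4, HsSq 1 Ω (dtn i v t)) '' Icc 0 T) ∧
  IntegrableOn (fun t => ∑ i ∈ Finset.range 2, HsSq 4 Ω (dtn i v t)) (Ioc 0 T) ∧
  IntegrableOn (fun t => ∑ i ∈ Finset.range 3, HsSq 3 Ω (dtn i v t)) (Ioc 0 T) ∧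
  IntegrableOn (fun t => ∑ i ∈ Finset.range 4, HsSq 2 Ω (dtn i v t)) (Ioc 0 T) ∧
  IntegrableOn (fun t => ∑ i ∈ Finset.range 5, HsSq 0 Ω (dtn i v t)) (Ioc 0 T)

/-- Membership in the closed ball 𝒲 ⊆ 𝒱. -/
def MemW {n : ℕ} (T : ℝ) (Ω : Set (EuclideanSpace ℝ (Fin n))) (abar : ℝ)
    (v : ℝ → EuclideanSpace ℝ (Fin n) → ℝ) : Prop :=
  MemV T Ω v ∧ VtildeSq T Ω v ≤ abar

/-- The Blackstock–Crighton left-hand side `(aΔ - ∂ₜ)(u_tt - bΔu_t - c²Δu)`. -/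
noncomputable def BCKlhs {n : ℕ} (a b c : ℝ) (u : ℝ → EuclideanSpace ℝ (Fin n) → ℝ) :
    ℝ → EuclideanSpace ℝ (Fin n) → ℝ :=
  fun t x =>
    a * lap (fun y => dtn 2 u t y - b * lap (dt u t) y - c^2 * lap (u t) y) x
      - dt (fun r y => dtn 2 u r y - b * lap (dt u r) y - c^2 * lap (u r) y) t x

/-- The nonlinearity `(k (u_t)² + s |∇u|²)_tt`. -/
noncomputable def nonlinF {n : ℕ} (k s : ℝ) (u : ℝ → EuclideanSpace ℝ (Fin n) → ℝ) :
    ℝ → EuclideanSpace ℝ (Fin n) → ℝ :=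
  dtn 2 (fun t x => k * (dt u t x)^2 + s * ‖gradient (u t) x‖^2)

/-- Embedding/Poincaré constants: H¹ ↪ L₂, H² ↪ L∞, H³ ↪ L∞. -/
def EmbHyp {n : ℕ} (Ω : Set (EuclideanSpace ℝ (Fin n))) (C1 C2 C3 : ℝ) : Prop :=
  (∀ v : EuclideanSpace ℝ (Fin n) → ℝ, ContDiff ℝ 4 v → (∀ x ∈ frontier Ω, v x = 0) →
      HsSq 0 Ω v ≤ C1^2 * HsSq 1 Ω v) ∧
  (∀ v : EuclideanSpace ℝ (Fin n) → ℝ, ContDiff ℝ 4 v → (∀ x ∈ frontier Ω, v x = 0) →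
      ∀ x ∈ Ω, (v x)^2 ≤ C2^2 * HsSq 2 Ω v) ∧
  (∀ v : EuclideanSpace ℝ (Fin n) → ℝ, ContDiff ℝ 4 v →
      (∀ x ∈ frontier Ω, v x = 0 ∧ lap v x = 0) →
      ∀ x ∈ Ω, (v x)^2 ≤ C3^2 * HsSq 3 Ω v)

/-- The heat operator `D_h u = u_t + a𝒜u = u_t − aΔu` (`𝒜 = −Δ`). -/
noncomputable def Dh {n : ℕ} (a : ℝ) (u : ℝ → EuclideanSpace ℝ (Fin n) → ℝ) :
    ℝ → EuclideanSpace ℝ (Fin n) → ℝ :=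
  fun t x => dt u t x - a * lap (u t) x

/-- The total energy `ℰ[u](t) = E₁[w](t) + E₂[u](t)`, `w = D_h u`, with
`E₁[w] = ½(‖𝒜^{1/2}w_tt‖² + ‖𝒜^{1/2}w_t‖² + ‖𝒜w‖²)` and
`E₂[u] = ½(‖𝒜^{1/2}u_ttt‖² + ‖𝒜u_tt‖² + ‖𝒜^{3/2}u_t‖² + ‖𝒜^{3/2}u‖²)`. -/
noncomputable def calE {n : ℕ} (a : ℝ) (Ω : Set (EuclideanSpace ℝ (Fin n)))
    (u : ℝ → EuclideanSpace ℝ (Fin n) → ℝ) (t : ℝ) : ℝ :=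
  (1/2) * (HsSq 1 Ω (dtn 2 (Dh a u) t) + HsSq 1 Ω (dt (Dh a u) t)
      + HsSq 2 Ω (Dh a u t))
    + (1/2) * (HsSq 1 Ω (dtn 3 u t) + HsSq 2 Ω (dtn 2 u t) + HsSq 3 Ω (dt u t)
      + HsSq 3 Ω (u t))

/-- `k[u](t) = ‖u_tttt‖² + ‖𝒜u_ttt‖² + ‖𝒜^{3/2}u_tt‖² + ‖𝒜²u_t‖² + ‖𝒜²u‖²`. -/
noncomputable def kfun {n : ℕ} (Ω : Set (EuclideanSpace ℝ (Fin n)))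
    (u : ℝ → EuclideanSpace ℝ (Fin n) → ℝ) (t : ℝ) : ℝ :=
  HsSq 0 Ω (dtn 4 u t) + HsSq 2 Ω (dtn 3 u t) + HsSq 3 Ω (dtn 2 u t)
    + HsSq 4 Ω (dt u t) + HsSq 4 Ω (u t)

/-- A (smooth) solution of the nonlinear Blackstock–Crighton–Kuznetsov equation on `(0,T)`
with homogeneous boundary conditions `u = Δu = 0`. -/
def IsNonlinSol {n : ℕ} (a b c k s T : ℝ) (Ω : Set (EuclideanSpace ℝ (Fin n)))
    (u : ℝ → EuclideanSpace ℝ (Fin n) → ℝ) : Prop :=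
  (∀ x, ContDiff ℝ 4 (fun t => u t x)) ∧
  (∀ i : ℕ, i ≤ 4 → ∀ t, ContDiff ℝ 4 (dtn i u t)) ∧
  (∀ t ∈ Ioo 0 T, ∀ x ∈ Ω, BCKlhs a b c u t x = nonlinF k s u t x) ∧
  (∀ t ∈ Ico 0 T, ∀ x ∈ frontier Ω, u t x = 0 ∧ lap (u t) x = 0)


lemma HsSq_nonneg {n : ℕ} (s : ℕ) (Ω : Set (EuclideanSpace ℝ (Fin n)))
    (v : EuclideanSpace ℝ (Fin n) → ℝ) : 0 ≤ HsSq s Ω v := by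
  match s with
  | 0 => exact integral_nonneg fun x => sq_nonneg _
  | 1 => exact integral_nonneg fun x => sq_nonneg _
  | 2 => exact integral_nonneg fun x => sq_nonneg _
  | 3 => exact integral_nonneg fun x => sq_nonneg _
  | (m+4) => exact integral_nonneg fun x => sq_nonneg _

lemma calE_nonneg {n : ℕ} (a : ℝ) (Ω : Set (EuclideanSpace ℝ (Fin n)))
    (u : ℝ → EuclideanSpace ℝ (Fin n) → ℝ) (t : ℝ) : 0 ≤ calE a Ω u t := by
  unfold calE
  have h1 := HsSq_nonneg 1 Ω (dtn 2 (Dh a u) t)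
  have h2 := HsSq_nonneg 1 Ω (dt (Dh a u) t)
  have h3 := HsSq_nonneg 2 Ω (Dh a u t)
  have h4 := HsSq_nonneg 1 Ω (dtn 3 u t)
  have h5 := HsSq_nonneg 2 Ω (dtn 2 u t)
  have h6 := HsSq_nonneg 3 Ω (dt u t)
  have h7 := HsSq_nonneg 3 Ω (u t)
  linarith

lemma kfun_nonneg {n : ℕ} (Ω : Set (EuclideanSpace ℝ (Fin n)))
    (u : ℝ → EuclideanSpace ℝ (Fin n) → ℝ) (t : ℝ) : 0 ≤ kfun Ω u t := by
  unfold kfun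
  have h1 := HsSq_nonneg 0 Ω (dtn 4 u t)
  have h2 := HsSq_nonneg 2 Ω (dtn 3 u t)
  have h3 := HsSq_nonneg 3 Ω (dtn 2 u t)
  have h4 := HsSq_nonneg 4 Ω (dt u t)
  have h5 := HsSq_nonneg 4 Ω (u t)
  linarith

/-- barrier argument in the proof of Theorem 4.6: if `ĉ` is the constant
of the nonlinear energy estimate and `ℰ[u](0) ≤ η ≤ (4ĉ max{1,ĉ})⁻¹`, then for every
`T > 0` one has `ℰ[u](T) ≤ 2 max{1,ĉ} η` and
`ℰ[u](T) + ½∫₀ᵀ (ℰ[u] + k[u]) dt ≤ ĉ ℰ[u](0)`. -/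
theorem barrier_argument {n : ℕ} (hn : 1 ≤ n ∧ n ≤ 3)
    (Ω : Set (EuclideanSpace ℝ (Fin n))) (hΩo : IsOpen Ω)
    (hΩb : Bornology.IsBounded Ω) (hΩne : Ω.Nonempty)
    (a b c k s : ℝ) (ha : 0 < a) (hb : 0 < b) (hc : 0 < c) (hk : 0 < k)
    (hs : s = 0 ∨ s = 1)
    (u : ℝ → EuclideanSpace ℝ (Fin n) → ℝ)
    (hu : ∀ T : ℝ, 0 < T → IsNonlinSol a b c k s T Ω u)
    (hcont : ContinuousOn (calE a Ω u) (Ici 0))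
    (hInt : ∀ T : ℝ, 0 < T →
      IntegrableOn (fun t => calE a Ω u t + kfun Ω u t) (Ioc 0 T) ∧
      IntegrableOn (fun t => kfun Ω u t) (Ioc 0 T))
    (chat : ℝ) (hchat : 0 < chat)
    (hest : ∀ T : ℝ, 0 < T →
      calE a Ω u T + (∫ t in Ioc 0 T, (calE a Ω u t + kfun Ω u t))
        ≤ chat * (calE a Ω u 0
            + sSup (calE a Ω u '' Icc 0 T) * ∫ t in Ioc 0 T, kfun Ω u t))
    (η : ℝ) (hη0 : calE a Ω u 0 ≤ η) (hηsmall : η ≤ (4 * chat * max 1 chat)⁻¹) :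
    ∀ T : ℝ, 0 < T →
      calE a Ω u T ≤ 2 * max 1 chat * η ∧
      calE a Ω u T + (1/2) * (∫ t in Ioc 0 T, (calE a Ω u t + kfun Ω u t))
        ≤ chat * calE a Ω u 0 := by
  set E := calE a Ω u with hE
  set B := (2 * chat)⁻¹ with hB
  set C := max 1 chat with hC
  have hC1 : (1 : ℝ) ≤ C := le_max_left _ _
  have hCchat : chat ≤ C := le_max_right _ _
  have hBpos : 0 < B := by positivity
  have hE0 : 0 ≤ E 0 := calE_nonneg a Ω u 0
  have hηnn : 0 ≤ η := hE0.trans hη0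
  have hηB : η < B := by
    have h1 : (2 * chat) < 4 * chat * C := by nlinarith
    have h2 : (4 * chat * C)⁻¹ < (2 * chat)⁻¹ := by
      apply inv_strictAnti₀ (by positivity) h1
    linarith
  -- key estimate under the barrier hypothesis
  have key : ∀ T : ℝ, 0 < T → (∀ t ∈ Icc 0 T, E t ≤ B) →
      E T + (1/2) * (∫ t in Ioc 0 T, (E t + kfun Ω u t)) ≤ chat * E 0 ∧
      E T ≤ chat * η := by
    intro T hT hbound
    obtain ⟨hI1, hI2⟩ := hInt T hT
    have hest' := hest T hT
    have hM : sSup (E '' Icc 0 T) ≤ B :=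
      csSup_le ((nonempty_Icc.2 hT.le).image _)
        (by rintro x ⟨t, ht, rfl⟩; exact hbound t ht)
    have hK0 : 0 ≤ ∫ t in Ioc 0 T, kfun Ω u t :=
      integral_nonneg fun t => kfun_nonneg Ω u t
    have hKI : (∫ t in Ioc 0 T, kfun Ω u t)
        ≤ ∫ t in Ioc 0 T, (E t + kfun Ω u t) := by
      exact integral_mono hI2 hI1 fun t => le_add_of_nonneg_left (calE_nonneg a Ω u t)
    have hI0 : 0 ≤ ∫ t in Ioc 0 T, (E t + kfun Ω u t) :=
      integral_nonneg fun t => add_nonneg (calE_nonneg a Ω u t) (kfun_nonneg Ω u t)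
    have hcB : chat * B = 1/2 := by
      rw [hB]
      field_simp
    have hmul : sSup (E '' Icc 0 T) * (∫ t in Ioc 0 T, kfun Ω u t)
        ≤ B * (∫ t in Ioc 0 T, kfun Ω u t) :=
      mul_le_mul_of_nonneg_right hM hK0
    have hstep : E T + (∫ t in Ioc 0 T, (E t + kfun Ω u t))
        ≤ chat * E 0 + (1/2) * (∫ t in Ioc 0 T, (E t + kfun Ω u t)) := by
      have h3 : chat * (B * (∫ t in Ioc 0 T, kfun Ω u t))
          = (1/2) * (∫ t in Ioc 0 T, kfun Ω u t) := by
        rw [← mul_assoc, hcB]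
      nlinarith [hest', hmul, hKI, hchat.le]
    constructor
    · linarith
    · have hEchat : E T ≤ chat * E 0 := by linarith
      have : chat * E 0 ≤ chat * η := mul_le_mul_of_nonneg_left hη0 hchat.le
      linarith
  -- barrier claim
  have claim : ∀ t : ℝ, 0 ≤ t → E t ≤ B := by
    by_contra hcon
    push_neg at hcon
    obtain ⟨t₁, ht₁0, ht₁⟩ := hcon
    set S := {t : ℝ | 0 ≤ t ∧ B < E t} with hS
    have hSne : S.Nonempty := ⟨t₁, ht₁0, ht₁⟩
    have hSbdd : BddBelow S := ⟨0, fun x hx => hx.1⟩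
    set t₀ := sInf S with ht₀
    have ht₀0 : 0 ≤ t₀ := le_csInf hSne fun x hx => hx.1
    have hlt : ∀ t : ℝ, 0 ≤ t → t < t₀ → E t ≤ B := by
      intro t ht htlt
      by_contra h'
      push_neg at h'
      exact absurd (csInf_le hSbdd ⟨ht, h'⟩) (not_le.2 htlt)
    have hge : B ≤ E t₀ := by
      by_contra h'
      push_neg at h'
      have hcw : ContinuousWithinAt E (Ici 0) t₀ := hcont t₀ ht₀0
      have hev : {x | E x < B} ∈ nhdsWithin t₀ (Ici 0) :=
        hcw (isOpen_Iio.mem_nhds h')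
      rw [Metric.mem_nhdsWithin_iff] at hev
      obtain ⟨ε, hε, hsub⟩ := hev
      obtain ⟨s, hsS, hslt⟩ := Real.lt_sInf_add_pos hSne hε
      have hs0 : t₀ ≤ s := csInf_le hSbdd hsS
      have hsb : s ∈ Metric.ball t₀ ε ∩ Ici 0 := by
        constructor
        · rw [Metric.mem_ball, Real.dist_eq, abs_of_nonneg (by linarith)]
          linarith
        · exact le_trans ht₀0 hs0
      have := hsub hsb
      exact absurd hsS.2 (not_lt.2 this.le)
    rcases eq_or_lt_of_le ht₀0 with heq | hpos
    · have : E 0 ≤ η := hη0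
      rw [← heq] at hge
      linarith
    · -- t₀ > 0 : show E t₀ ≤ B by left continuity, then contradiction via key
      have hclos : t₀ ∈ closure (Ioo 0 t₀) := by
        rw [closure_Ioo hpos.ne]
        exact ⟨le_of_lt hpos, le_refl _⟩
      haveI hne : (nhdsWithin t₀ (Ioo 0 t₀)).NeBot :=
        mem_closure_iff_nhdsWithin_neBot.mp hclos
      have htd : Filter.Tendsto E (nhdsWithin t₀ (Ioo 0 t₀)) (nhds (E t₀)) :=
        (hcont t₀ ht₀0).mono_left (nhdsWithin_mono _ fun x hx => le_of_lt hx.1)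
      have hEt₀ : E t₀ ≤ B := by
        refine le_of_tendsto htd ?_
        filter_upwards [self_mem_nhdsWithin] with x hx
        exact hlt x hx.1.le hx.2
      have hsup : ∀ t ∈ Icc 0 t₀, E t ≤ B := by
        intro t ⟨h0, h1⟩
        rcases eq_or_lt_of_le h1 with rfl | h1'
        · exact hEt₀
        · exact hlt t h0 h1'
      have hk2 := (key t₀ hpos hsup).2
      have hmul2 : chat * η ≤ chat * (4 * chat * C)⁻¹ :=
        mul_le_mul_of_nonneg_left hηsmall hchat.le
      have hcc : chat * (4 * chat * C)⁻¹ = (4 * C)⁻¹ := by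
        field_simp
      have hlt4 : (4 * C)⁻¹ < (2 * chat)⁻¹ := by
        apply inv_strictAnti₀ (by positivity)
        nlinarith
      rw [hcc] at hmul2
      have : E t₀ < B := by rw [hB]; linarith
      linarith
  intro T hT
  have hsup : ∀ t ∈ Icc 0 T, E t ≤ B := fun t ht => claim t ht.1
  obtain ⟨h2, h1⟩ := key T hT hsup
  refine ⟨?_, h2⟩
  have hchc : chat * η ≤ C * η := mul_le_mul_of_nonneg_right hCchat hηnn
  have hCη : 0 ≤ C * η := by positivity
  calc E T ≤ chat * η := h1
    _ ≤ C * η := hchc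
    _ ≤ 2 * C * η := by linarith
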